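/- Let p : Fin n → ℝ² be a clockwise enumeration of a set P in convex position and let ε ≥ 0, and assume that for every i the closed ball of radius ε centered at p i does not contain all of P. If Q ⊆ P is a valid greedy sequence whose cardinality is minimum among all valid greedy sequences, then cost(Q,P) ≤ ε and |Q| = min{ |Q'| : Q' ⊆ P, Q' ≠ ∅, cost(Q',P) ≤ ε }; that is, Q is an optimal solution of the min-k problem for (P, ε). -/

import Mathlib

open Set Metric

noncomputable abbrev Pt := EuclideanSpace ℝ (Fin 2)

/-- The planar determinant `det(u,v) = u₁·v₂ − u₂·v₁`. -/
def detv (u v : Pt) : ℝ := u 0 * v 1 - u 1 * v 0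

/-- `cost Q P` is the maximum (as a supremum) over `p ∈ P` of the distance from `p`
to the convex hull of `Q`. -/
noncomputable def cost (Q P : Set Pt) : ℝ :=
  sSup ((fun p => Metric.infDist p (convexHull ℝ Q)) '' P)

/-- `cost0 p i j` : the maximum distance to the segment `[p i, p j]` among the points
`p v` with `v` clockwise between `i` and `j` (clockwise offsets measured by `Fin`
subtraction, i.e. `(x - i) mod n`). -/
noncomputable def cost0 {n : ℕ} (p : Fin n → Pt) (i j : Fin n) : ℝ :=
  sSup ((fun v => Metric.infDist (p v) (segment ℝ (p i) (p j))) ''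
    {v : Fin n | v - i ≤ j - i})

/-- `Q` is a valid greedy sequence for the friend function `f`:
`Q = {p l₁, …, p l_k}` with `l₁ < ⋯ < l_k`, `f l_t = l_{t+1}` for `t < k`,
`f l_k < l_k`, and (validity) `l₁ ≤ f l_k`. -/
def ValidGreedy {n : ℕ} (p : Fin n → Pt) (f : Fin n → Fin n) (Q : Set Pt) : Prop :=
  ∃ (k : ℕ) (hk : 0 < k) (ℓ : Fin k → Fin n), StrictMono ℓ ∧ Q = p '' Set.range ℓ ∧
    (∀ (t : ℕ) (ht : t + 1 < k), f (ℓ ⟨t, by omega⟩) = ℓ ⟨t + 1, ht⟩) ∧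
    f (ℓ ⟨k - 1, by omega⟩) < ℓ ⟨k - 1, by omega⟩ ∧
    ℓ ⟨0, hk⟩ ≤ f (ℓ ⟨k - 1, by omega⟩)

set_option linter.unusedSectionVars false

lemma ptext {u v : Pt} (h0 : u 0 = v 0) (h1 : u 1 = v 1) : u = v := by
  apply PiLp.ext; intro i; fin_cases i
  · exact h0
  · exact h1

lemma key {V I J w : Pt} (h0 : 0 < detv (J - I) (V - I)) (hw : detv (J - I) (w - I) ≤ 0)
    (h1 : detv (w - V) (I - V) ≤ 0) (h2 : 0 ≤ detv (w - V) (J - V)) :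
    ∃ x ∈ segment ℝ I J, dist V x ≤ dist V w := by
  have hDg : detv (w - V) (J - I) = detv (J - I) (V - I) - detv (J - I) (w - I) := by
    simp only [detv, PiLp.sub_apply]; ring
  have he2 : detv (w - V) (J - V) = detv (w - V) (J - I) + detv (w - V) (I - V) := by
    simp only [detv, PiLp.sub_apply]; ring
  have hD : 0 < detv (w - V) (J - I) := by linarith
  have hD0 : detv (w - V) (J - I) ≠ 0 := ne_of_gt hD
  have hx : V + (detv (J - I) (V - I) / detv (w - V) (J - I)) • (w - V)
      = (1 - -(detv (w - V) (I - V)) / detv (w - V) (J - I)) • I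
        + (-(detv (w - V) (I - V)) / detv (w - V) (J - I)) • J := by
    apply ptext <;>
    · simp only [PiLp.add_apply, PiLp.sub_apply, PiLp.smul_apply, smul_eq_mul]
      field_simp
      simp only [detv, PiLp.sub_apply]
      ring
  have hc0 : 0 ≤ -(detv (w - V) (I - V)) / detv (w - V) (J - I) :=
    div_nonneg (by linarith) (le_of_lt hD)
  have hc1 : -(detv (w - V) (I - V)) / detv (w - V) (J - I) ≤ 1 := by
    rw [div_le_one hD]; linarith
  have hs0 : 0 < detv (J - I) (V - I) / detv (w - V) (J - I) := div_pos h0 hD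
  have hs1 : detv (J - I) (V - I) / detv (w - V) (J - I) ≤ 1 := by
    rw [div_le_one hD]; linarith
  refine ⟨V + (detv (J - I) (V - I) / detv (w - V) (J - I)) • (w - V), ?_, ?_⟩
  · rw [hx]
    exact ⟨1 - _, _, by linarith, hc0, by ring, rfl⟩
  · have hdx : dist V (V + (detv (J - I) (V - I) / detv (w - V) (J - I)) • (w - V))
        = (detv (J - I) (V - I) / detv (w - V) (J - I)) * ‖w - V‖ := by
      rw [dist_eq_norm]
      have h' : V - (V + (detv (J - I) (V - I) / detv (w - V) (J - I)) • (w - V))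
          = (-(detv (J - I) (V - I) / detv (w - V) (J - I))) • (w - V) := by module
      rw [h', norm_smul]
      rw [Real.norm_eq_abs, abs_neg, abs_div, abs_of_pos h0, abs_of_pos hD]
    have hw' : dist V w = ‖w - V‖ := by
      rw [dist_eq_norm, ← norm_neg]; congr 1; module
    rw [hdx, hw']
    nlinarith [norm_nonneg (w - V)]

-- Fin subtraction val toolkit
lemma dval_le {n : ℕ} [NeZero n] {a b : Fin n} (h : b ≤ a) : (a - b).val = a.val - b.val := by
  rw [Fin.sub_def]
  simp only []
  have hb := b.isLt
  have ha := a.isLt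
  have hba : b.val ≤ a.val := h
  have : n - b.val + a.val = (a.val - b.val) + n := by omega
  rw [this, Nat.add_mod_right, Nat.mod_eq_of_lt (by omega)]

lemma dval_gt {n : ℕ} [NeZero n] {a b : Fin n} (h : a < b) : (a - b).val = a.val + n - b.val := by
  rw [Fin.sub_def]
  simp only []
  have hb := b.isLt
  have ha := a.isLt
  have hba : a.val < b.val := h
  rw [Nat.mod_eq_of_lt (by omega)]
  omega

lemma dval_lt {n : ℕ} [NeZero n] (a b : Fin n) : (a - b).val < n := (a - b).isLt

lemma dval_self {n : ℕ} [NeZero n] (a : Fin n) : (a - a).val = 0 := by rw [dval_le (le_refl a)]; omega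

lemma dval_eq_zero {n : ℕ} [NeZero n] {a b : Fin n} (h : (a - b).val = 0) : a = b := by
  rcases lt_or_ge a b with hh | hh
  · rw [dval_gt hh] at h; have := b.isLt; have : a.val = b.val := by omega
    exact Fin.ext this
  · rw [dval_le hh] at h; have hba : b.val ≤ a.val := hh
    exact Fin.ext (by omega)

lemma dval_inj {n : ℕ} [NeZero n] {i a b : Fin n} (h : (a - i).val = (b - i).val) : a = b := by
  have : a - i = b - i := Fin.ext h
  exact sub_left_injective this

-- difference arithmetic through a base point
lemma d_trans {n : ℕ} [NeZero n] {i a b : Fin n} (h : (a - i).val ≤ (b - i).val) :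
    (b - a).val = (b - i).val - (a - i).val := by
  have h2 : (b - i) - (a - i) = b - a := sub_sub_sub_cancel_right b a i
  rw [← h2, dval_le (Fin.le_def.mpr h)]

lemma d_add {n : ℕ} [NeZero n] {i a b : Fin n} (h : (a - i).val + (b - a).val < n) :
    (b - i).val = (a - i).val + (b - a).val := by
  have h2 : (a - i) + (b - a) = b - i := by
    rw [add_comm]; exact sub_add_sub_cancel b a i
  rw [← h2, Fin.add_def]
  simp only []
  rw [Nat.mod_eq_of_lt h]

lemma d_neg {n : ℕ} [NeZero n] {a b : Fin n} (h : a ≠ b) : (b - a).val = n - (a - b).val := by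
  rcases lt_or_ge a b with hh | hh
  · rw [dval_le (le_of_lt hh), dval_gt hh]; have := b.isLt; have h3 : a.val < b.val := hh; omega
  · have hh2 : b < a := lt_of_le_of_ne hh (by simpa using (Ne.symm h))
    rw [dval_gt hh2, dval_le (le_of_lt hh2)]
    have := a.isLt; have h3 : b.val < a.val := hh2
    have h4 : b.val ≠ a.val := fun hx => h (Fin.ext hx).symm
    omega

lemma detv_swap (u v : Pt) : detv u v = - detv v u := by simp only [detv]; ring
lemma detv_rot (a b c : Pt) : detv (b - a) (c - a) = detv (c - b) (a - b) := by
  simp only [detv, PiLp.sub_apply]; ring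
lemma detv_zero_right (u : Pt) : detv u 0 = 0 := by simp [detv]
lemma detv_self (u : Pt) : detv u u = 0 := by simp only [detv]; ring
lemma detv_combo2 {u z a b : Pt} {α β : ℝ} (hs : α + β = 1) :
    detv u (α • a + β • b - z) = α * detv u (a - z) + β * detv u (b - z) := by
  have hβ : β = 1 - α := by linarith
  subst hβ
  simp only [detv, PiLp.add_apply, PiLp.sub_apply, PiLp.smul_apply, smul_eq_mul]; ring
lemma detv_combo1 {y z a b : Pt} {α β : ℝ} (hs : α + β = 1) :
    detv (α • a + β • b - z) y = α * detv (a - z) y + β * detv (b - z) y := by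
  have hβ : β = 1 - α := by linarith
  subst hβ
  simp only [detv, PiLp.add_apply, PiLp.sub_apply, PiLp.smul_apply, smul_eq_mul]; ring

section CW
variable {n : ℕ} [NeZero n] {p : Fin n → Pt}

lemma hcw3 (hcw : ∀ i j l : Fin n, i < j → j < l → detv (p j - p i) (p l - p i) < 0)
    {a b c : Fin n} (hab : a ≠ b) (hac : a ≠ c) (h : b - a < c - a) :
    detv (p b - p a) (p c - p a) < 0 := by
  have hbc : b ≠ c := by rintro rfl; exact lt_irrefl _ h
  have hval : (b - a).val < (c - a).val := h
  rcases lt_trichotomy a b with h1 | h1 | h1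
  · rcases lt_trichotomy b c with h2 | h2 | h2
    · exact hcw a b c h1 h2
    · exact absurd h2 hbc
    · -- b > c ; need c vs a
      rcases lt_trichotomy a c with h3 | h3 | h3
      · -- a < c < b : contradiction with hval
        exfalso
        rw [dval_le (le_of_lt h1), dval_le (le_of_lt h3)] at hval
        have : a.val < b.val := h1
        have : c.val < b.val := h2
        have : a.val < c.val := h3
        omega
      · exact absurd h3 hac
      · -- c < a < b : cyclic (c,a,b)
        have := hcw c a b h3 h1
        rw [detv_rot] at this
        exact this
  · exact absurd h1 hab
  · -- b < a
    rcases lt_trichotomy b c with h2 | h2 | h2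
    · rcases lt_trichotomy c a with h3 | h3 | h3
      · -- b < c < a : cyclic (b,c,a)
        have := hcw b c a h2 h3
        rw [detv_rot, detv_rot] at this
        exact this
      · exact absurd h3.symm hac
      · -- b < a < c : contradiction
        exfalso
        rw [dval_gt h1, dval_le (le_of_lt h3)] at hval
        have hb := b.isLt; have hc := c.isLt
        have : b.val < a.val := h1
        have : a.val < c.val := h3
        omega
    · exact absurd h2 hbc
    · -- c < b < a : contradiction
      exfalso
      rw [dval_gt h1, dval_gt (lt_trans h2 h1)] at hval
      have : b.val < a.val := h1
      have : c.val < b.val := h2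
      omega

end CW

lemma le_infDist_of {x : Pt} {s t : Set Pt} (ht : t.Nonempty)
    (h : ∀ w ∈ t, ∃ y ∈ s, dist x y ≤ dist x w) : infDist x s ≤ infDist x t := by
  conv_rhs => rw [Metric.infDist_eq_iInf]
  haveI := ht.to_subtype
  apply le_ciInf
  rintro ⟨w, hw⟩
  obtain ⟨y, hy, hle⟩ := h w hw
  exact le_trans (Metric.infDist_le_dist_of_mem hy) hle

section GEO
variable {n : ℕ} [NeZero n] {p : Fin n → Pt}
  (hcw : ∀ i j l : Fin n, i < j → j < l → detv (p j - p i) (p l - p i) < 0)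

lemma d_wrap {i a b : Fin n} (h : (a - i).val < (b - i).val) :
    (a - b).val = (a - i).val + n - (b - i).val := by
  have h2 : (a - i) - (b - i) = a - b := sub_sub_sub_cancel_right a b i
  rw [← h2, dval_gt (Fin.lt_def.mpr h)]

include hcw in
lemma geo {i i' j' j v : Fin n}
    (h1 : (i' - i).val ≤ (v - i).val) (h2 : (v - i).val ≤ (j' - i).val)
    (h3 : (j' - i).val ≤ (j - i).val)
    (hvi' : v ≠ i') (hvj' : v ≠ j') (hij' : i' ≠ j') :
    infDist (p v) (segment ℝ (p i') (p j')) ≤ infDist (p v) (segment ℝ (p i) (p j)) := by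
  have hn := (j - i).isLt
  have hAV : (i' - i).val < (v - i).val := lt_of_le_of_ne h1 (fun hx => hvi' (dval_inj hx.symm))
  have hVJ' : (v - i).val < (j' - i).val := lt_of_le_of_ne h2 (fun hx => hvj' (dval_inj hx))
  have hvi : v ≠ i := by
    intro hx; subst hx; rw [dval_self] at hAV; omega
  have hj'i : j' ≠ i := by
    intro hx; subst hx; rw [dval_self] at hVJ'; omega
  have hji : j ≠ i := by
    intro hx; subst hx; rw [dval_self] at h3; omega
  have hij : i' ≠ j := by
    intro hx; subst hx; omega
  have hvj : v ≠ j := by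
    intro hx; subst hx; omega
  -- val computations
  have e1 : (v - i').val = (v - i).val - (i' - i).val := d_trans h1
  have e2 : (j' - i').val = (j' - i).val - (i' - i).val := d_trans (le_trans h1 h2)
  have e3 : (j - i').val = (j - i).val - (i' - i).val := d_trans (le_trans h1 (le_trans h2 h3))
  have e4 : (i - v).val = n - (v - i).val := d_neg hvi
  have e5 : (i' - v).val = (i' - i).val + n - (v - i).val := d_wrap hAV
  have e6 : (j - v).val = (j - i).val - (v - i).val := d_trans (le_trans h2 h3)
  have e7 : (j' - v).val = (j' - i).val - (v - i).val := d_trans h2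
  have h0key : 0 < detv (p j' - p i') (p v - p i') := by
    have hd : v - i' < j' - i' := by rw [Fin.lt_def]; omega
    have := hcw3 hcw (Ne.symm hvi') hij' hd
    rw [detv_swap] at this; linarith
  have c1 : detv (p j' - p i') (p i - p i') ≤ 0 := by
    by_cases hii' : i = i'
    · subst hii'; rw [sub_self, detv_zero_right]
    · have hA1 : 0 < (i' - i).val := by
        rcases Nat.eq_zero_or_pos (i' - i).val with hz | hz
        · exact absurd (dval_eq_zero hz) (Ne.symm hii')
        · exact hz
      have hd : i' - i < j' - i := by rw [Fin.lt_def]; omega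
      have := hcw3 hcw hii' (Ne.symm hj'i) hd
      rw [detv_rot] at this; linarith
  have c2 : detv (p j' - p i') (p j - p i') ≤ 0 := by
    by_cases hjj' : j = j'
    · subst hjj'; exact le_of_eq (detv_self _)
    · have hJJ : (j' - i).val < (j - i).val := lt_of_le_of_ne h3 (fun hx => hjj' (dval_inj hx.symm))
      have hd : j' - i' < j - i' := by rw [Fin.lt_def]; omega
      exact le_of_lt (hcw3 hcw hij' hij hd)
  have c3 : detv (p i - p v) (p i' - p v) ≤ 0 := by
    by_cases hii' : i = i'
    · subst hii'; exact le_of_eq (detv_self _)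
    · have hA1 : 0 < (i' - i).val := by
        rcases Nat.eq_zero_or_pos (i' - i).val with hz | hz
        · exact absurd (dval_eq_zero hz) (Ne.symm hii')
        · exact hz
      have hd : i - v < i' - v := by rw [Fin.lt_def]; omega
      exact le_of_lt (hcw3 hcw hvi hvi' hd)
  have c4 : detv (p j - p v) (p i' - p v) ≤ 0 := by
    have hd : j - v < i' - v := by rw [Fin.lt_def]; omega
    exact le_of_lt (hcw3 hcw hvj hvi' hd)
  have c5 : 0 ≤ detv (p i - p v) (p j' - p v) := by
    have hd : j' - v < i - v := by rw [Fin.lt_def]; omega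
    have := hcw3 hcw hvj' hvi hd
    rw [detv_swap] at this; linarith
  have c6 : 0 ≤ detv (p j - p v) (p j' - p v) := by
    by_cases hjj' : j = j'
    · subst hjj'; exact le_of_eq (detv_self _).symm
    · have hJJ : (j' - i).val < (j - i).val := lt_of_le_of_ne h3 (fun hx => hjj' (dval_inj hx.symm))
      have hd : j' - v < j - v := by rw [Fin.lt_def]; omega
      have := hcw3 hcw hvj' hvj hd
      rw [detv_swap] at this; linarith
  apply le_infDist_of ⟨p i, left_mem_segment ℝ _ _⟩
  rintro w ⟨α, β, hα, hβ, hαβ, rfl⟩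
  apply key
  · exact h0key
  · rw [detv_combo2 hαβ]
    nlinarith
  · rw [detv_combo1 hαβ]
    nlinarith
  · rw [detv_combo1 hαβ]
    nlinarith

end GEO

section COST0
variable {n : ℕ} [NeZero n] {p : Fin n → Pt} {ε : ℝ}

lemma le_cost0 {i j v : Fin n} (h : (v - i).val ≤ (j - i).val) :
    infDist (p v) (segment ℝ (p i) (p j)) ≤ cost0 p i j :=
  le_csSup ((Set.toFinite _).image _).bddAbove ⟨v, Fin.le_def.mpr h, rfl⟩

lemma cost0_le {i j : Fin n} {c : ℝ}
    (h : ∀ v : Fin n, (v - i).val ≤ (j - i).val → infDist (p v) (segment ℝ (p i) (p j)) ≤ c) :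
    cost0 p i j ≤ c := by
  apply csSup_le
  · exact ⟨_, ⟨i, Fin.le_def.mpr (by rw [dval_self]; omega), rfl⟩⟩
  · rintro x ⟨v, hv, rfl⟩
    exact h v (Fin.le_def.mp hv)

variable (hcw : ∀ i j l : Fin n, i < j → j < l → detv (p j - p i) (p l - p i) < 0)

include hcw in
lemma F_shrink (hε : 0 ≤ ε) {a b y : Fin n} (hF : cost0 p a b ≤ ε) (hab : a ≠ b) (hyb : y ≠ b)
    (hy : (y - a).val ≤ (b - a).val) : cost0 p y b ≤ ε := by
  apply cost0_le
  intro v hv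
  by_cases hvy : v = y
  · subst hvy
    rw [Metric.infDist_zero_of_mem (left_mem_segment ℝ _ _)]; exact hε
  by_cases hvb : v = b
  · subst hvb
    rw [Metric.infDist_zero_of_mem (right_mem_segment ℝ _ _)]; exact hε
  have hby : (b - y).val = (b - a).val - (y - a).val := d_trans hy
  have hn := (b - a).isLt
  have hva : (v - a).val = (y - a).val + (v - y).val :=
    d_add (by omega)
  have hgeo := geo hcw (i := a) (i' := y) (j' := b) (j := b)
    (by omega) (by omega) (le_refl _) hvy hvb hyb
  calc infDist (p v) (segment ℝ (p y) (p b)) ≤ infDist (p v) (segment ℝ (p a) (p b)) := hgeo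
    _ ≤ cost0 p a b := le_cost0 (by omega)
    _ ≤ ε := hF

end COST0

lemma part1 {n : ℕ} (p : Fin n → Pt)
    (hcw : ∀ i j l : Fin n, i < j → j < l → detv (p j - p i) (p l - p i) < 0)
    {ε : ℝ} (hε : 0 ≤ ε) (f : Fin n → Fin n)
    (hf : ∀ i : Fin n, f i ≠ i ∧ cost0 p i (f i) ≤ ε ∧
      ∀ j : Fin n, j ≠ i → cost0 p i j ≤ ε → j - i ≤ f i - i)
    (Q : Set Pt) (hQ : ValidGreedy p f Q) : cost Q (Set.range p) ≤ ε := by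
  obtain ⟨k, hk, ℓ, hmono, hQeq, hchain, hlast, hvalid⟩ := hQ
  haveI : NeZero n := ⟨(ℓ ⟨0, hk⟩).pos.ne'⟩
  have hkk : k - 1 < k := by omega
  set L0 := ℓ ⟨0, hk⟩ with hL0
  set Lk := ℓ ⟨k - 1, hkk⟩ with hLk
  have hk2 : 2 ≤ k := by
    by_contra hlt
    have hk1 : k = 1 := by omega
    have : (⟨0, hk⟩ : Fin k) = ⟨k - 1, hkk⟩ := by
      apply Fin.ext; simp; omega
    have hE : L0 = Lk := by rw [hL0, hLk]; exact congrArg ℓ this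
    rw [hE] at hvalid
    exact absurd (lt_of_le_of_lt hvalid hlast) (lt_irrefl _)
  have hL0k : L0 < Lk := by
    apply hmono
    rw [Fin.lt_def]; simp; omega
  have hQsub : ∀ t : Fin k, p (ℓ t) ∈ Q := by
    intro t; rw [hQeq]; exact Set.mem_image_of_mem p ⟨t, rfl⟩
  have hseg : ∀ t s : Fin k, segment ℝ (p (ℓ t)) (p (ℓ s)) ⊆ convexHull ℝ Q :=
    fun t s => (convex_convexHull ℝ Q).segment_subset
      (subset_convexHull ℝ Q (hQsub t)) (subset_convexHull ℝ Q (hQsub s))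
  have hhullne : (convexHull ℝ Q).Nonempty := ⟨p L0, subset_convexHull ℝ Q (hQsub _)⟩
  haveI : Nonempty (Fin n) := ⟨L0⟩
  apply csSup_le ((Set.range_nonempty p).image _)
  rintro x ⟨q, ⟨v, rfl⟩, rfl⟩
  simp only
  -- bound infDist (p v) (convexHull ℝ Q) ≤ ε
  by_cases hcase : L0.val ≤ v.val ∧ v.val ≤ Lk.val
  · -- interior case
    obtain ⟨hlow, hhigh⟩ := hcase
    set S := Finset.univ.filter (fun t : Fin k => (ℓ t).val ≤ v.val) with hS
    have hSne : S.Nonempty := ⟨⟨0, hk⟩, by simp [hS]; exact hlow⟩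
    set t0 := S.max' hSne with ht0
    have ht0mem : (ℓ t0).val ≤ v.val := by
      have hmem := S.max'_mem hSne
      simp only [hS, Finset.mem_filter] at hmem
      exact hmem.2
    by_cases htop : t0.val = k - 1
    · -- v = Lk
      have hvLk : v = Lk := by
        have hE : ℓ t0 = Lk := congrArg ℓ (Fin.ext htop)
        apply Fin.ext
        rw [hE] at ht0mem
        omega
      subst hvLk
      rw [Metric.infDist_zero_of_mem (subset_convexHull ℝ Q (hQsub _))]; exact hε
    · have ht1lt : t0.val + 1 < k := by have := t0.isLt; omega
      set t1 : Fin k := ⟨t0.val + 1, ht1lt⟩ with ht1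
      have ht1nm : v.val < (ℓ t1).val := by
        by_contra hcon
        push_neg at hcon
        have : t1 ∈ S := by simp [hS]; exact hcon
        have := S.le_max' t1 this
        rw [← ht0] at this
        have : t0.val + 1 ≤ t0.val := this
        omega
      have harc : (v - ℓ t0).val ≤ (ℓ t1 - ℓ t0).val := by
        have h1 : ℓ t0 ≤ v := Fin.le_def.mpr ht0mem
        have h2 : ℓ t0 < ℓ t1 := hmono (by rw [Fin.lt_def]; simp [ht1])
        rw [dval_le h1, dval_le (le_of_lt h2)]
        have := Fin.lt_def.mp h2
        omega
      have hft0 : f (ℓ t0) = ℓ t1 := by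
        have := hchain t0.val ht1lt
        have he : (⟨t0.val, by omega⟩ : Fin k) = t0 := Fin.ext rfl
        rw [he] at this
        exact this
      calc infDist (p v) (convexHull ℝ Q)
          ≤ infDist (p v) (segment ℝ (p (ℓ t0)) (p (ℓ t1))) :=
            Metric.infDist_le_infDist_of_subset (hseg t0 t1) (Set.nonempty_of_mem (left_mem_segment ℝ _ _))
        _ ≤ cost0 p (ℓ t0) (ℓ t1) := le_cost0 harc
        _ = cost0 p (ℓ t0) (f (ℓ t0)) := by rw [hft0]
        _ ≤ ε := (hf (ℓ t0)).2.1
  · -- wrap case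
    push_neg at hcase
    set w := f Lk with hw
    have hwlt : w < Lk := hlast
    have hL0w : L0 ≤ w := hvalid
    have hvne0 : v ≠ L0 := by
      intro hx; subst hx
      rcases Nat.lt_or_ge L0.val Lk.val with hh | hh
      · have := hcase (le_refl _); omega
      · have := Fin.lt_def.mp hL0k; omega
    have hvnek : v ≠ Lk := by
      intro hx; subst hx
      have := Fin.lt_def.mp hL0k
      have := hcase (by omega)
      omega
    have hkne0 : Lk ≠ L0 := ne_of_gt hL0k
    have hv1 : (L0 - Lk).val = L0.val + n - Lk.val := dval_gt hL0k
    have hv2 : (w - Lk).val = w.val + n - Lk.val := dval_gt hwlt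
    have hv3 : (v - Lk).val ≤ (L0 - Lk).val := by
      rcases Nat.lt_or_ge v.val Lk.val with hh | hh
      · have hvlt : v < Lk := Fin.lt_def.mpr hh
        rw [dval_gt hvlt, hv1]
        have hcc : v.val < L0.val := by
          by_contra hcon; push_neg at hcon
          have := hcase hcon; omega
        omega
      · have hvge : Lk ≤ v := Fin.le_def.mpr hh
        rw [dval_le hvge, hv1]
        have := v.isLt; have := Fin.lt_def.mp hL0k
        omega
    have hv4 : (L0 - Lk).val ≤ (w - Lk).val := by
      rw [hv1, hv2]
      have := Fin.le_def.mp hL0w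
      have := Fin.lt_def.mp hwlt
      omega
    have hgeo := geo hcw (i := Lk) (i' := Lk) (j' := L0) (j := w)
      (by rw [dval_self]; omega) hv3 hv4 hvnek hvne0 hkne0
    calc infDist (p v) (convexHull ℝ Q)
        ≤ infDist (p v) (segment ℝ (p Lk) (p L0)) :=
          Metric.infDist_le_infDist_of_subset (hseg _ _) (Set.nonempty_of_mem (left_mem_segment ℝ _ _))
      _ ≤ infDist (p v) (segment ℝ (p Lk) (p w)) := hgeo
      _ ≤ cost0 p Lk w := le_cost0 (by omega)
      _ ≤ ε := (hf Lk).2.1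

section LOWER
variable {n : ℕ} [NeZero n] {p : Fin n → Pt} {ε : ℝ}
variable (hcw : ∀ i j l : Fin n, i < j → j < l → detv (p j - p i) (p l - p i) < 0)

lemma convex_detv2 (u z : Pt) : Convex ℝ {w : Pt | detv u (w - z) ≤ 0} := by
  intro x hx y hy α β hα hβ hαβ
  simp only [Set.mem_setOf_eq] at *
  rw [detv_combo2 hαβ]
  nlinarith

lemma convex_detv1 (y z : Pt) : Convex ℝ {w : Pt | detv (w - z) y ≤ 0} := by
  intro x hx x' hx' α β hα hβ hαβ
  simp only [Set.mem_setOf_eq] at *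
  rw [detv_combo1 hαβ]
  nlinarith

lemma convex_detv1' (y z : Pt) : Convex ℝ {w : Pt | 0 ≤ detv (w - z) y} := by
  intro x hx x' hx' α β hα hβ hαβ
  simp only [Set.mem_setOf_eq] at *
  rw [detv_combo1 hαβ]
  nlinarith

include hcw in
lemma lower_feasible (hε : 0 ≤ ε) {Q' : Set Pt}
    (hQ'lep : ∀ v : Fin n, infDist (p v) (convexHull ℝ Q') ≤ ε)
    (hQ'sub : Q' ⊆ Set.range p)
    {a b : Fin n} (ha : p a ∈ Q') (hb : p b ∈ Q') (hab : a ≠ b)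
    (hsep : ∀ u : Fin n, p u ∈ Q' → (u - b).val ≤ (a - b).val) :
    cost0 p a b ≤ ε := by
  apply cost0_le
  intro v hv
  by_cases hva : v = a
  · subst hva; rw [Metric.infDist_zero_of_mem (left_mem_segment ℝ _ _)]; exact hε
  by_cases hvb : v = b
  · subst hvb; rw [Metric.infDist_zero_of_mem (right_mem_segment ℝ _ _)]; exact hε
  have hnab := (b - a).isLt
  have hvpos : 0 < (v - a).val := by
    rcases Nat.eq_zero_or_pos (v - a).val with hz | hz
    · exact absurd (dval_eq_zero hz) hva
    · exact hz
  have hvlt : (v - a).val < (b - a).val := lt_of_le_of_ne hv (fun hx => hvb (dval_inj hx))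
  have hnba : (a - b).val = n - (b - a).val := d_neg (Ne.symm hab)
  -- hull is inside the three halfplanes
  have hsubC : convexHull ℝ Q' ⊆ {w : Pt | detv (p b - p a) (w - p a) ≤ 0}
      ∩ ({w : Pt | detv (w - p v) (p a - p v) ≤ 0} ∩ {w : Pt | 0 ≤ detv (w - p v) (p b - p v)}) := by
    apply convexHull_min _ ((convex_detv2 _ _).inter ((convex_detv1 _ _).inter (convex_detv1' _ _)))
    intro w hw
    obtain ⟨u, rfl⟩ := hQ'sub hw
    have hsu := hsep u hw
    refine ⟨?_, ?_, ?_⟩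
    · -- detv (p b - p a) (p u - p a) ≤ 0
      show detv (p b - p a) (p u - p a) ≤ 0
      by_cases hua : u = a
      · subst hua; rw [sub_self, detv_zero_right]
      by_cases hub : u = b
      · subst hub; exact le_of_eq (detv_self _)
      · have e1 : (a - u).val = (a - b).val - (u - b).val := d_trans hsu
        have e2 : (b - u).val = n - (u - b).val := d_neg hub
        have hu1 : 0 < (u - b).val := by
          rcases Nat.eq_zero_or_pos (u - b).val with hz | hz
          · exact absurd (dval_eq_zero hz) hub
          · exact hz
        have hd : a - u < b - u := by rw [Fin.lt_def]; omega
        have := hcw3 hcw hua hub hd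
        rw [detv_rot] at this
        linarith
    · -- detv (p u - p v) (p a - p v) ≤ 0
      show detv (p u - p v) (p a - p v) ≤ 0
      by_cases hua : u = a
      · subst hua; exact le_of_eq (detv_self _)
      · have hun : (u - a).val = (b - a).val + (u - b).val := by
          have hlt : (b - a).val + (u - b).val < n := by
            have : (u - b).val < (a - b).val := lt_of_le_of_ne hsu (fun hx => hua (dval_inj hx))
            omega
          exact d_add hlt
        have e1 : (u - v).val = (u - a).val - (v - a).val := by
          apply d_trans; omega
        have e2 : (a - v).val = n - (v - a).val := d_neg hva
        have hun2 := (u - a).isLt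
        have hvu : v ≠ u := by
          intro hx; subst hx; omega
        have hd : u - v < a - v := by rw [Fin.lt_def]; omega
        exact le_of_lt (hcw3 hcw hvu hva hd)
    · -- 0 ≤ detv (p u - p v) (p b - p v)
      show 0 ≤ detv (p u - p v) (p b - p v)
      by_cases hub : u = b
      · subst hub; exact le_of_eq (detv_self _).symm
      by_cases hua : u = a
      · rw [hua]
        have e1 : (b - v).val = (b - a).val - (v - a).val := d_trans (le_of_lt hvlt)
        have e2 : (a - v).val = n - (v - a).val := d_neg hva
        have hd : b - v < a - v := by rw [Fin.lt_def]; omega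
        have := hcw3 hcw hvb hva hd
        rw [detv_swap] at this
        linarith
      · have hun : (u - a).val = (b - a).val + (u - b).val := by
          have : (u - b).val < (a - b).val := lt_of_le_of_ne hsu (fun hx => hua (dval_inj hx))
          exact d_add (by omega)
        have hu1 : 0 < (u - b).val := by
          rcases Nat.eq_zero_or_pos (u - b).val with hz | hz
          · exact absurd (dval_eq_zero hz) hub
          · exact hz
        have e1 : (b - v).val = (b - a).val - (v - a).val := d_trans (le_of_lt hvlt)
        have e2 : (u - v).val = (u - a).val - (v - a).val := by
          apply d_trans; omega
        have hvu : v ≠ u := by intro hx; subst hx; omega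
        have hd : b - v < u - v := by rw [Fin.lt_def]; omega
        have := hcw3 hcw hvb hvu hd
        rw [detv_swap] at this
        linarith
  -- now compare distances
  have hkey : infDist (p v) (segment ℝ (p a) (p b)) ≤ infDist (p v) (convexHull ℝ Q') := by
    apply le_infDist_of ⟨p a, subset_convexHull ℝ Q' ha⟩
    intro w hw
    obtain ⟨hw1, hw2, hw3⟩ := hsubC hw
    apply key _ hw1 hw2 hw3
    have hd : v - a < b - a := Fin.lt_def.mpr hvlt
    have h5 := hcw3 hcw (Ne.symm hva) hab hd
    rw [detv_swap] at h5
    linarith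
  exact le_trans hkey (hQ'lep v)

section CHAIN
variable {n : ℕ} [NeZero n] {p : Fin n → Pt} {f : Fin n → Fin n} {ε : ℝ}

lemma exists_valid_le (hinj : Function.Injective p)
    (hcw : ∀ i j l : Fin n, i < j → j < l → detv (p j - p i) (p l - p i) < 0)
    (hf : ∀ i : Fin n, f i ≠ i ∧ cost0 p i (f i) ≤ ε ∧
      ∀ j : Fin n, j ≠ i → cost0 p i j ≤ ε → j - i ≤ f i - i)
    (hε : 0 ≤ ε) {m : ℕ} (hm : 2 ≤ m) (q : Fin m → Fin n) (hqmono : StrictMono q)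
    (hpairs : ∀ (t : ℕ) (h1 : t < m) (h2 : t + 1 < m), cost0 p (q ⟨t, h1⟩) (q ⟨t+1, h2⟩) ≤ ε)
    (hwrap : cost0 p (q ⟨m-1, by omega⟩) (q ⟨0, by omega⟩) ≤ ε) :
    ∃ Q'', ValidGreedy p f Q'' ∧ Q''.ncard ≤ m := by
  have hne : ∀ y : Fin n, (f y).val ≠ y.val := fun y h => (hf y).1 (Fin.ext h)
  have hit : ∀ (c : ℕ) (x : Fin n), f^[c+1] x = f (f^[c] x) :=
    fun c x => by exact Function.iterate_succ_apply' f c x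
  have hfmax : ∀ y z : Fin n, z ≠ y → cost0 p y z ≤ ε → (z - y).val ≤ (f y - y).val :=
    fun y z h1 h2 => Fin.le_def.mp ((hf y).2.2 z h1 h2)
  have hex : ∀ x : Fin n, ∃ c, ((f^[c+1] x).val < (f^[c] x).val) := by
    intro x
    by_contra hcon
    push_neg at hcon
    have hstep : ∀ c, (f^[c] x).val < (f^[c+1] x).val := by
      intro c
      have h1 := hcon c
      have h2 : (f^[c+1] x).val ≠ (f^[c] x).val := by
        rw [hit]; exact hne _
      omega
    have hgrow : ∀ c, c + x.val ≤ (f^[c] x).val := by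
      intro c; induction c with
      | zero => simp
      | succ c ih => have := hstep c; omega
    have h3 := hgrow n
    have h4 := (f^[n] x).isLt
    omega
  set T : Fin n → ℕ := fun x => Nat.find (hex x) with hT
  have hTcross : ∀ x, (f^[T x + 1] x).val < (f^[T x] x).val := fun x => Nat.find_spec (hex x)
  have hTmin : ∀ x, ∀ t, t < T x → (f^[t] x).val < (f^[t+1] x).val := by
    intro x t ht
    have h1 := Nat.find_min (hex x) ht
    have h2 : (f^[t+1] x).val ≠ (f^[t] x).val := by
      rw [hit]; exact hne _
    omega
  have hTmono : ∀ x, ∀ a b : ℕ, a ≤ b → b ≤ T x → (f^[a] x).val ≤ (f^[b] x).val := by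
    intro x a b hab hb
    induction b with
    | zero =>
      have : a = 0 := by omega
      subst this; exact le_refl _
    | succ b ih =>
      rcases Nat.lt_or_ge a (b+1) with hh | hh
      · exact le_trans (ih (by omega) (by omega)) (le_of_lt (hTmin x b (by omega)))
      · have : a = b + 1 := by omega
        subst this; exact le_refl _
  -- building a valid greedy sequence from a good start
  have hmk : ∀ x : Fin n, x.val ≤ (f^[T x + 1] x).val →
      ∃ Q'', ValidGreedy p f Q'' ∧ Q''.ncard = T x + 1 := by
    intro x hx
    have hℓmono : StrictMono (fun t : Fin (T x + 1) => f^[t.val] x) := by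
      intro t t' htt
      show f^[t.val] x < f^[t'.val] x
      have h1 := hTmono x (t.val+1) t'.val (Fin.lt_def.mp htt) (by have := t'.isLt; omega)
      have h2 := hTmin x t.val (by have := t'.isLt; have := Fin.lt_def.mp htt; omega)
      exact Fin.lt_def.mpr (by omega)
    refine ⟨p '' Set.range (fun t : Fin (T x + 1) => f^[t.val] x),
      ⟨T x + 1, by omega, fun t => f^[t.val] x, hℓmono, rfl, ?_, ?_, ?_⟩, ?_⟩
    · intro t ht
      show f (f^[t] x) = f^[t+1] x
      rw [hit]
    · show f (f^[(T x + 1 - 1)] x) < f^[T x + 1 - 1] x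
      have he : T x + 1 - 1 = T x := by omega
      rw [he, ← hit]
      exact Fin.lt_def.mpr (hTcross x)
    · show (f^[0] x) ≤ f (f^[T x + 1 - 1] x)
      have he : T x + 1 - 1 = T x := by omega
      rw [he, ← hit]
      exact Fin.le_def.mpr hx
    · rw [Set.ncard_image_of_injective _ hinj, ← Set.image_univ,
        Set.ncard_image_of_injective _ hℓmono.injective, Set.ncard_univ]
      simp
  -- notation
  have hm1 : m - 1 < m := by omega
  have h0m : 0 < m := by omega
  set s : Fin n := q ⟨0, h0m⟩ with hs
  set qm : Fin n := q ⟨m-1, hm1⟩ with hqm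
  have hsqm : s.val < qm.val := Fin.lt_def.mp (hqmono (Fin.lt_def.mpr (by simp; omega)))
  have hqmne : qm ≠ s := fun h => by rw [h] at hsqm; omega
  -- dominance for the chain started at s
  have hDom : ∀ (t : ℕ) (ht : t < m), t ≤ T s → (q ⟨t, ht⟩).val ≤ (f^[t] s).val := by
    intro t
    induction t with
    | zero => intro ht _; exact le_refl _
    | succ t ih =>
      intro ht hts
      have htm : t < m := by omega
      have ihv := ih htm (by omega)
      have hcr := hTmin s t (by omega)
      rcases Nat.lt_or_ge (f^[t] s).val (q ⟨t+1, ht⟩).val with hlt | hge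
      · -- strictly between q t and q (t+1)
        have hq12 : (q ⟨t, htm⟩).val < (q ⟨t+1, ht⟩).val :=
          Fin.lt_def.mp (hqmono (Fin.lt_def.mpr (by simp)))
        have hyne : f^[t] s ≠ q ⟨t+1, ht⟩ := fun h => by rw [h] at hlt; omega
        have habq : q ⟨t, htm⟩ ≠ q ⟨t+1, ht⟩ := fun h => by
          have := congrArg Fin.val h; omega
        have hFyb : cost0 p (f^[t] s) (q ⟨t+1, ht⟩) ≤ ε := by
          apply F_shrink hcw hε (hpairs t htm ht) habq hyne
          have hle1 : q ⟨t, htm⟩ ≤ f^[t] s := Fin.le_def.mpr ihv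
          have hle2 : q ⟨t, htm⟩ ≤ q ⟨t+1, ht⟩ := Fin.le_def.mpr (by omega)
          rw [dval_le hle1, dval_le hle2]
          omega
        have hmax := hfmax (f^[t] s) (q ⟨t+1, ht⟩) (Ne.symm hyne) hFyb
        have hle3 : f^[t] s ≤ q ⟨t+1, ht⟩ := Fin.le_def.mpr (by omega)
        have hle4 : f^[t] s ≤ f (f^[t] s) := Fin.le_def.mpr (by rw [hit] at hcr; omega)
        rw [dval_le hle3, dval_le hle4] at hmax
        rw [hit] at hcr ⊢
        omega
      · omega
  -- T s ≤ m - 1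
  have hTsle : T s ≤ m - 1 := by
    by_contra hcon
    push_neg at hcon
    have hym : (q ⟨m-1, hm1⟩).val ≤ (f^[m-1] s).val := hDom (m-1) hm1 (by omega)
    have hcr := hTmin s (m-1) (by omega)
    have hyne : f^[m-1] s ≠ s := by
      intro h
      have := congrArg Fin.val h
      omega
    have hF : cost0 p (f^[m-1] s) s ≤ ε := by
      apply F_shrink hcw hε hwrap hqmne hyne
      have hle14 : qm ≤ f^[m-1] s := Fin.le_def.mpr hym
      rw [dval_le hle14, dval_gt (Fin.lt_def.mpr hsqm)]
      have := (f^[m-1] s).isLt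
      omega
    have hmax := hfmax (f^[m-1] s) s (Ne.symm hyne) hF
    have hlt1 : s < f^[m-1] s := Fin.lt_def.mpr (by omega)
    have hle5 : f^[m-1] s ≤ f (f^[m-1] s) := Fin.le_def.mpr (by rw [hit] at hcr; omega)
    rw [dval_gt hlt1, dval_le hle5] at hmax
    rw [hit] at hcr
    have := (f (f^[m-1] s)).isLt
    omega
  rcases Nat.lt_or_ge (f^[T s + 1] s).val s.val with hland | hgood
  swap
  · -- landing is at or after s : valid sequence of length T s + 1 ≤ m
    obtain ⟨Q'', hv, hc⟩ := hmk s hgood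
    exact ⟨Q'', hv, by omega⟩
  · -- landing strictly before s
    have hTs2 : T s + 2 ≤ m := by
      rcases Nat.lt_or_ge (T s) (m - 1) with hh | hh
      · omega
      · exfalso
        have hTse : T s = m - 1 := by omega
        have hym : (q ⟨m-1, hm1⟩).val ≤ (f^[m-1] s).val := hDom (m-1) hm1 (by omega)
        have hyne : f^[m-1] s ≠ s := by
          intro h; have := congrArg Fin.val h; omega
        have hF : cost0 p (f^[m-1] s) s ≤ ε := by
          apply F_shrink hcw hε hwrap hqmne hyne
          have hle15 : qm ≤ f^[m-1] s := Fin.le_def.mpr hym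
          rw [dval_le hle15, dval_gt (Fin.lt_def.mpr hsqm)]
          have := (f^[m-1] s).isLt
          omega
        have hmax := hfmax (f^[m-1] s) s (Ne.symm hyne) hF
        rw [hTse] at hland
        have hcr := hTcross s
        rw [hTse] at hcr
        rw [hit] at hcr hland
        rw [dval_gt (Fin.lt_def.mpr (by omega)),
          dval_gt (Fin.lt_def.mpr (Nat.lt_of_lt_of_le hcr (le_refl _)))] at hmax
        omega
    -- strong induction on starting point below s
    have hrec : ∀ (N : ℕ), ∀ a : Fin n, a.val = N → a.val < s.val →
        ∃ Q'', ValidGreedy p f Q'' ∧ Q''.ncard ≤ m := by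
      intro N
      induction N using Nat.strong_induction_on with
      | _ N ihN =>
        intro a haN has
        -- chain from a dominates the s chain shifted by one
        have hDom' : ∀ (t : ℕ), 1 ≤ t → t ≤ T a → t ≤ T s + 1 →
            (f^[t-1] s).val ≤ (f^[t] a).val := by
          intro t
          induction t with
          | zero => omega
          | succ t iht =>
            intro _ hta hts
            rcases Nat.eq_or_lt_of_le (Nat.one_le_iff_ne_zero.mpr (by omega) : 1 ≤ t + 1) with h1 | h1
            · -- t = 0 : first step
              have ht0 : t = 0 := by omega
              subst ht0
              show s.val ≤ (f a).val
              have hane : a ≠ s := fun h => by rw [h] at has; omega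
              have hF : cost0 p a s ≤ ε := by
                apply F_shrink hcw hε hwrap hqmne hane
                have hlt4 : a < qm := Fin.lt_def.mpr (by omega)
                rw [dval_gt hlt4, dval_gt (Fin.lt_def.mpr hsqm)]
                omega
              have hmax := hfmax a s (Ne.symm hane) hF
              have hcr := hTmin a 0 (by omega)
              rw [hit] at hcr
              simp only [Function.iterate_zero, id_eq] at hcr
              have hle6 : a ≤ s := Fin.le_def.mpr (by omega)
              have hle7 : a ≤ f a := Fin.le_def.mpr (by omega)
              rw [dval_le hle6, dval_le hle7] at hmax
              omega
            · -- t ≥ 1 : inductive step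
              have iht' := iht (by omega) (by omega) (by omega)
              have hcr := hTmin a t (by omega)
              rcases Nat.lt_or_ge (f^[t] a).val (f^[t] s).val with hlt | hge
              · -- between f^[t-1] s and f^[t] s
                have hscr : (f^[t-1] s).val < (f^[t] s).val := by
                  have := hTmin s (t-1) (by omega)
                  have he : t - 1 + 1 = t := by omega
                  rw [he] at this
                  omega
                have hFst : cost0 p (f^[t-1] s) (f^[t] s) ≤ ε := by
                  have he : f^[t] s = f (f^[t-1] s) := by
                    conv_lhs => rw [show t = (t-1) + 1 by omega]
                    exact hit _ _
                  rw [he]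
                  exact (hf (f^[t-1] s)).2.1
                have hyne : f^[t] a ≠ f^[t] s := fun h => by
                  rw [h] at hlt; omega
                have habs : f^[t-1] s ≠ f^[t] s := fun h => by
                  have := congrArg Fin.val h; omega
                have hFyb : cost0 p (f^[t] a) (f^[t] s) ≤ ε := by
                  apply F_shrink hcw hε hFst habs hyne
                  have hle11 : f^[t-1] s ≤ f^[t] a := Fin.le_def.mpr iht'
                  have hle12 : f^[t-1] s ≤ f^[t] s := Fin.le_def.mpr (by omega)
                  rw [dval_le hle11, dval_le hle12]
                  omega
                have hmax := hfmax (f^[t] a) (f^[t] s) (Ne.symm hyne) hFyb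
                have hle8 : f^[t] a ≤ f^[t] s := Fin.le_def.mpr (by omega)
                have hle9 : f^[t] a ≤ f (f^[t] a) := Fin.le_def.mpr (by rw [hit] at hcr; omega)
                rw [dval_le hle8, dval_le hle9] at hmax
                rw [hit] at hcr
                have he : t + 1 - 1 = t := by omega
                rw [he, hit]
                omega
              · have he : t + 1 - 1 = t := by omega
                rw [he]
                omega
        -- T a ≤ T s + 1
        have hTale : T a ≤ T s + 1 := by
          by_contra hcon
          push_neg at hcon
          have hyv := hDom' (T s + 1) (by omega) (by omega) (by omega)
          simp only [Nat.add_sub_cancel] at hyv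
          have hcrs := hTcross s
          have hcra := hTmin a (T s + 1) (by omega)
          have hyne : f^[T s + 1] a ≠ f^[T s + 1] s := fun h => by
            have := congrArg Fin.val h; omega
          have habs : f^[T s] s ≠ f^[T s + 1] s := fun h => by
            have := congrArg Fin.val h; omega
          have hFst : cost0 p (f^[T s] s) (f^[T s + 1] s) ≤ ε := by
            rw [hit]
            exact (hf (f^[T s] s)).2.1
          have hFyb : cost0 p (f^[T s + 1] a) (f^[T s + 1] s) ≤ ε := by
            apply F_shrink hcw hε hFst habs hyne
            have hle13 : f^[T s] s ≤ f^[T s + 1] a := Fin.le_def.mpr hyv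
            rw [dval_le hle13, dval_gt (Fin.lt_def.mpr hcrs)]
            have := (f^[T s + 1] a).isLt
            omega
          have hmax := hfmax (f^[T s + 1] a) (f^[T s + 1] s) (Ne.symm hyne) hFyb
          have hlt5 : f^[T s + 1] s < f^[T s + 1] a := Fin.lt_def.mpr (by omega)
          have hle10 : f^[T s + 1] a ≤ f (f^[T s + 1] a) := Fin.le_def.mpr (by rw [← hit]; omega)
          rw [dval_gt hlt5, dval_le hle10] at hmax
          have := (f (f^[T s + 1] a)).isLt
          omega
        rcases Nat.lt_or_ge (f^[T a + 1] a).val a.val with hland' | hgood'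
        · -- recurse on the landing point
          exact ihN (f^[T a + 1] a).val (by omega) _ rfl (by omega)
        · obtain ⟨Q'', hv, hc⟩ := hmk a hgood'
          exact ⟨Q'', hv, by omega⟩
    exact hrec (f^[T s + 1] s).val _ rfl (by omega)

end CHAIN

theorem stmt_6 (n : ℕ) (p : Fin n → Pt)
    (hinj : Function.Injective p)
    (hcw : ∀ i j l : Fin n, i < j → j < l → detv (p j - p i) (p l - p i) < 0)
    (ε : ℝ) (hε : 0 ≤ ε)
    (hball : ∀ i : Fin n, ¬ (Set.range p ⊆ Metric.closedBall (p i) ε))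
    (f : Fin n → Fin n)
    (hf : ∀ i : Fin n, f i ≠ i ∧ cost0 p i (f i) ≤ ε ∧
      ∀ j : Fin n, j ≠ i → cost0 p i j ≤ ε → j - i ≤ f i - i)
    (Q : Set Pt) (hQ : ValidGreedy p f Q)
    (hmin : ∀ Q' : Set Pt, ValidGreedy p f Q' → Q.ncard ≤ Q'.ncard) :
    cost Q (Set.range p) ≤ ε ∧
    Q.ncard = sInf { m : ℕ | ∃ Q' : Set Pt, Q' ⊆ Set.range p ∧ Q'.Nonempty ∧
      cost Q' (Set.range p) ≤ ε ∧ m = Q'.ncard } := by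
  have hpart1 : cost Q (Set.range p) ≤ ε := part1 p hcw hε f hf Q hQ
  obtain ⟨k, hk, ℓ, hmono, hQeq, -, -, -⟩ := hQ
  haveI : NeZero n := ⟨(ℓ ⟨0, hk⟩).pos.ne'⟩
  have hQsub : Q ⊆ Set.range p := by
    rw [hQeq]; rintro x ⟨u, -, rfl⟩; exact ⟨u, rfl⟩
  have hQne : Q.Nonempty := by
    rw [hQeq]; exact ⟨p (ℓ ⟨0, hk⟩), Set.mem_image_of_mem p ⟨⟨0, hk⟩, rfl⟩⟩
  have hmem : Q.ncard ∈ { m : ℕ | ∃ Q' : Set Pt, Q' ⊆ Set.range p ∧ Q'.Nonempty ∧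
      cost Q' (Set.range p) ≤ ε ∧ m = Q'.ncard } := ⟨Q, hQsub, hQne, hpart1, rfl⟩
  refine ⟨hpart1, le_antisymm ?_ (Nat.sInf_le hmem)⟩
  apply le_csInf ⟨Q.ncard, hmem⟩
  rintro b ⟨Q', hQ'sub, hQ'ne, hQ'cost, rfl⟩
  -- extract the index set of Q'
  set M : Set (Fin n) := p ⁻¹' Q' with hM
  have hQ'eq : Q' = p '' M := by
    apply Set.Subset.antisymm
    · intro x hx
      obtain ⟨u, rfl⟩ := hQ'sub hx
      exact Set.mem_image_of_mem p hx
    · rintro x ⟨u, hu, rfl⟩; exact hu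
  have hMcard : M.ncard = Q'.ncard := by
    rw [hQ'eq, Set.ncard_image_of_injective M hinj]
  have hMfin : M.Finite := Set.toFinite M
  have hMne : M.Nonempty := by
    obtain ⟨x, hx⟩ := hQ'ne
    obtain ⟨u, rfl⟩ := hQ'sub hx
    exact ⟨u, hx⟩
  -- pointwise bound from the cost bound
  have hQ'lep : ∀ v : Fin n, infDist (p v) (convexHull ℝ Q') ≤ ε := by
    intro v
    refine le_trans ?_ hQ'cost
    exact le_csSup ((Set.toFinite _).image _).bddAbove ⟨p v, ⟨v, rfl⟩, rfl⟩
  set m : ℕ := M.ncard with hm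
  have hm1 : 1 ≤ m := by
    rw [hm]
    exact (Set.ncard_pos hMfin).mpr hMne
  have hm2 : 2 ≤ m := by
    rcases Nat.lt_or_ge m 2 with hh | hh
    · exfalso
      have hm1' : m = 1 := by omega
      obtain ⟨u, hu⟩ := Set.ncard_eq_one.mp (hm ▸ hm1')
      apply hball u
      rintro x ⟨v, rfl⟩
      have : Q' = {p u} := by rw [hQ'eq, hu, Set.image_singleton]
      have h2 := hQ'lep v
      rw [this, convexHull_singleton, Metric.infDist_singleton] at h2
      exact Metric.mem_closedBall.mpr h2
    · exact hh
  -- enumerate M in increasing order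
  have hFc : hMfin.toFinset.card = m := by
    rw [hm, Set.ncard_eq_toFinset_card M hMfin]
  set qe := hMfin.toFinset.orderIsoOfFin hFc with hqe
  set qf : Fin m → Fin n := fun t => (qe t : Fin n) with hqf
  have hqmono : StrictMono qf := fun a b h => by
    exact_mod_cast qe.strictMono h
  have hqmem : ∀ t, qf t ∈ M := by
    intro t
    have := (qe t).2
    rwa [Set.Finite.mem_toFinset] at this
  have hqsurj : ∀ u, u ∈ M → ∃ t, qf t = u := by
    intro u hu
    refine ⟨qe.symm ⟨u, hMfin.mem_toFinset.mpr hu⟩, ?_⟩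
    rw [hqf]
    simp
  have hmemQ' : ∀ t : Fin m, p (qf t) ∈ Q' := fun t => by
    rw [hQ'eq]; exact Set.mem_image_of_mem p (hqmem t)
  -- feasibility of consecutive pairs
  have hpairs : ∀ (t : ℕ) (h1 : t < m) (h2 : t + 1 < m),
      cost0 p (qf ⟨t, h1⟩) (qf ⟨t+1, h2⟩) ≤ ε := by
    intro t h1 h2
    have hab : qf ⟨t, h1⟩ ≠ qf ⟨t+1, h2⟩ :=
      (hqmono (Fin.lt_def.mpr (by simp))).ne
    apply lower_feasible hcw hε hQ'lep hQ'sub (hmemQ' ⟨t, h1⟩) (hmemQ' ⟨t+1, h2⟩) hab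
    intro u hu
    obtain ⟨r, rfl⟩ := hqsurj u hu
    have hvab : (qf ⟨t, h1⟩).val < (qf ⟨t+1, h2⟩).val :=
      Fin.lt_def.mp (hqmono (Fin.lt_def.mpr (by simp)))
    rcases Nat.lt_or_ge r.val (t+1) with hr | hr
    · -- r ≤ t : u ≤ qf t < qf (t+1)
      have hur : (qf r).val ≤ (qf ⟨t, h1⟩).val :=
        Fin.le_def.mp (hqmono.monotone (Fin.le_def.mpr (by simp; omega)))
      have hlt : qf r < qf ⟨t+1, h2⟩ := Fin.lt_def.mpr (by omega)
      rw [dval_gt hlt, dval_gt (Fin.lt_def.mpr hvab)]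
      omega
    · -- r ≥ t+1 : u ≥ qf (t+1)
      have hur : (qf ⟨t+1, h2⟩).val ≤ (qf r).val :=
        Fin.le_def.mp (hqmono.monotone (Fin.le_def.mpr (by simp; omega)))
      have hge : qf ⟨t+1, h2⟩ ≤ qf r := Fin.le_def.mpr hur
      rw [dval_le hge, dval_gt (Fin.lt_def.mpr hvab)]
      have := (qf r).isLt
      omega
  have hwrap : cost0 p (qf ⟨m-1, by omega⟩) (qf ⟨0, by omega⟩) ≤ ε := by
    have hab : qf ⟨0, by omega⟩ ≠ qf ⟨m-1, by omega⟩ :=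
      (hqmono (Fin.lt_def.mpr (by simp; omega))).ne
    apply lower_feasible hcw hε hQ'lep hQ'sub (hmemQ' ⟨m-1, by omega⟩) (hmemQ' ⟨0, by omega⟩)
      (Ne.symm hab)
    intro u hu
    obtain ⟨r, rfl⟩ := hqsurj u hu
    have h0r : (qf ⟨0, by omega⟩).val ≤ (qf r).val :=
      Fin.le_def.mp (hqmono.monotone (Fin.le_def.mpr (by simp)))
    have hrm : (qf r).val ≤ (qf ⟨m-1, by omega⟩).val :=
      Fin.le_def.mp (hqmono.monotone (Fin.le_def.mpr (by simp; have := r.isLt; omega)))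
    have hge : qf ⟨0, by omega⟩ ≤ qf r := Fin.le_def.mpr h0r
    have hge2 : qf ⟨0, by omega⟩ ≤ qf ⟨m-1, by omega⟩ :=
      hqmono.monotone (Fin.le_def.mpr (by simp))
    have e1 := dval_le hge
    have e2 := dval_le hge2
    omega
  obtain ⟨Q'', hVG, hle⟩ := exists_valid_le hinj hcw hf hε hm2 qf hqmono hpairs hwrap
  calc Q.ncard ≤ Q''.ncard := hmin Q'' hVG
    _ ≤ m := hle
    _ = Q'.ncard := hMcard
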